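/- Let O be the Hurwitz order in the quaternion algebra D = ℍ[ℚ, -1, -1], namely the subring of D spanned over ℤ by 1, i, j, and ω = (1 + i + j + ij)/2. Then the canonical ring homomorphism O → O/2O induces a surjective group homomorphism O^× → (O/2O)^× on unit groups. -/

import Mathlib

/-!
The Hurwitz order `O` consists of the quaternions `(x₀ + x₁ i + x₂ j + x₃ k) / 2` with all `xₗ`
of the same parity, so `2O` consists of the integral quaternions whose coordinates all have the
same parity. Let `a ∈ O` be a unit modulo `2O`.
* If the `xₗ` are odd, choose `sₗ = ±1` with `sₗ ≡ xₗ mod 4`; the unit `(s₀ + s₁ i + s₂ j + s₃ k) / 2`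
  of `O` is congruent to `a`.
* Otherwise `a = y₀ + y₁ i + y₂ j + y₃ k` is integral. If `∑ yₗ` is even, then `a²`, whose real part
  is `≡ ∑ yₗ` and whose imaginary parts are even, lies in `2O`; this is impossible for a unit of
  the nonzero ring `O / 2O`.
* If `∑ yₗ` is odd, then every coordinate of `a (1 + i + j + k)` is odd, so `a ω` with the unit
  `ω = (1 + i + j + k) / 2` falls under the first case.
-/

open Quaternion

local notation "D" => ℍ[ℚ, -1, -1]

namespace Hurwitz

theorem sq_emod_two (y : ℤ) : y ^ 2 % 2 = y % 2 := by
  rcases Int.even_or_odd' y with ⟨k, rfl | rfl⟩ <;> ring_nf <;> omega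

theorem exists_sq_eq_one_add_four_mul {x : ℤ} (hx : x % 2 = 1) :
    ∃ s t : ℤ, s ^ 2 = 1 ∧ s % 2 = 1 ∧ x = s + 4 * t := by
  obtain h | h : x % 4 = 1 ∨ x % 4 = 3 := by omega
  · exact ⟨1, x / 4, by norm_num, by norm_num, by omega⟩
  · exact ⟨-1, (x + 1) / 4, by norm_num, by norm_num, by omega⟩

def half (x₀ x₁ x₂ x₃ : ℤ) : D := ⟨x₀ / 2, x₁ / 2, x₂ / 2, x₃ / 2⟩

def SameParity (x₀ x₁ x₂ x₃ : ℤ) : Prop :=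
  x₀ % 2 = x₁ % 2 ∧ x₀ % 2 = x₂ % 2 ∧ x₀ % 2 = x₃ % 2

def lattice : Submodule ℤ D :=
  Submodule.span ℤ {1, ⟨0, 1, 0, 0⟩, ⟨0, 0, 1, 0⟩, ⟨1/2, 1/2, 1/2, 1/2⟩}

theorem basis_combination_eq_half (m n p q : ℤ) :
    m • (1 : D) + (n • ⟨0, 1, 0, 0⟩ + (p • ⟨0, 0, 1, 0⟩ + q • ⟨1/2, 1/2, 1/2, 1/2⟩)) =
      half (2 * m + q) (2 * n + q) (2 * p + q) q := by
  ext <;> simp [half] <;> ring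

theorem mem_lattice_iff {a : D} :
    a ∈ lattice ↔ ∃ x₀ x₁ x₂ x₃, SameParity x₀ x₁ x₂ x₃ ∧ a = half x₀ x₁ x₂ x₃ := by
  simp only [lattice, Submodule.mem_span_insert, Submodule.mem_span_singleton]
  constructor
  · rintro ⟨m, _, ⟨n, _, ⟨p, _, ⟨q, rfl⟩, rfl⟩, rfl⟩, rfl⟩
    exact ⟨_, _, _, _, by unfold SameParity; omega, basis_combination_eq_half m n p q⟩
  · rintro ⟨x₀, x₁, x₂, x₃, hx, rfl⟩
    obtain ⟨m, rfl⟩ : ∃ m, x₀ = 2 * m + x₃ := ⟨(x₀ - x₃) / 2, by unfold SameParity at hx; omega⟩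
    obtain ⟨n, rfl⟩ : ∃ n, x₁ = 2 * n + x₃ := ⟨(x₁ - x₃) / 2, by unfold SameParity at hx; omega⟩
    obtain ⟨p, rfl⟩ : ∃ p, x₂ = 2 * p + x₃ := ⟨(x₂ - x₃) / 2, by unfold SameParity at hx; omega⟩
    exact ⟨m, _, ⟨n, _, ⟨p, _, ⟨x₃, rfl⟩, rfl⟩, rfl⟩, (basis_combination_eq_half m n p x₃).symm⟩

variable {O : Subring D}

theorem mem_iff (hO : (O : Set D) = lattice) {a : D} :
    a ∈ O ↔ ∃ x₀ x₁ x₂ x₃, SameParity x₀ x₁ x₂ x₃ ∧ a = half x₀ x₁ x₂ x₃ := by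
  rw [← SetLike.mem_coe, hO, SetLike.mem_coe, mem_lattice_iff]

theorem half_mem (hO : (O : Set D) = lattice) {x₀ x₁ x₂ x₃ : ℤ} (hx : SameParity x₀ x₁ x₂ x₃) :
    half x₀ x₁ x₂ x₃ ∈ O :=
  (mem_iff hO).2 ⟨_, _, _, _, hx, rfl⟩

theorem half_mul_half_conj {s₀ s₁ s₂ s₃ : ℤ} (hnorm : s₀ ^ 2 + s₁ ^ 2 + s₂ ^ 2 + s₃ ^ 2 = 4) :
    half s₀ s₁ s₂ s₃ * half s₀ (-s₁) (-s₂) (-s₃) = 1 ∧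
      half s₀ (-s₁) (-s₂) (-s₃) * half s₀ s₁ s₂ s₃ = 1 := by
  have : (s₀ : ℚ) ^ 2 + s₁ ^ 2 + s₂ ^ 2 + s₃ ^ 2 = 4 := by exact_mod_cast hnorm
  constructor <;> ext
  all_goals simp [half]
  all_goals first | ring1 | linear_combination this / 4

def unitOfHalf (hO : (O : Set D) = lattice) {s₀ s₁ s₂ s₃ : ℤ} (hs : SameParity s₀ s₁ s₂ s₃)
    (hnorm : s₀ ^ 2 + s₁ ^ 2 + s₂ ^ 2 + s₃ ^ 2 = 4) : Oˣ where
  val := ⟨half s₀ s₁ s₂ s₃, half_mem hO hs⟩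
  inv := ⟨half s₀ (-s₁) (-s₂) (-s₃), half_mem hO (by unfold SameParity at hs ⊢; omega)⟩
  val_inv := Subtype.ext (half_mul_half_conj hnorm).1
  inv_val := Subtype.ext (half_mul_half_conj hnorm).2

theorem two_mul_half (x₀ x₁ x₂ x₃ : ℤ) : 2 * half x₀ x₁ x₂ x₃ = ⟨x₀, x₁, x₂, x₃⟩ := by
  rw [two_mul]; ext <;> simp [half]

theorem half_two_mul (y₀ y₁ y₂ y₃ : ℤ) :
    half (2 * y₀) (2 * y₁) (2 * y₂) (2 * y₃) = ⟨y₀, y₁, y₂, y₃⟩ := by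
  ext <;> simp [half]

variable {c : RingCon O}

theorem mk'_eq_mk'_of_sub_eq (hO : (O : Set D) = lattice)
    (hc : ∀ a b : O, c a b ↔ ∃ v : O, a - b = 2 * v) {a b : O} {z₀ z₁ z₂ z₃ : ℤ}
    (hz : SameParity z₀ z₁ z₂ z₃) (h : (a : D) - b = ⟨z₀, z₁, z₂, z₃⟩) :
    c.mk' a = c.mk' b :=
  c.eq.2 <| (hc a b).2 ⟨⟨half z₀ z₁ z₂ z₃, half_mem hO hz⟩, Subtype.ext <| by
    change (a : D) - b = 2 * half z₀ z₁ z₂ z₃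
    rw [h, two_mul_half]⟩

theorem nontrivial_quotient (hO : (O : Set D) = lattice)
    (hc : ∀ a b : O, c a b ↔ ∃ v : O, a - b = 2 * v) : Nontrivial c.Quotient := by
  refine ⟨⟨c.mk' 1, c.mk' 0, fun h ↦ ?_⟩⟩
  obtain ⟨v, hv⟩ := (hc 1 0).1 (c.eq.1 h)
  obtain ⟨x₀, x₁, x₂, x₃, hx, hvx⟩ := (mem_iff hO).1 v.2
  have h1 : (1 : D) = ⟨x₀, x₁, x₂, x₃⟩ := by
    rw [← two_mul_half, ← hvx]; simpa [two_mul] using congrArg Subtype.val hv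
  have hre : (1 : ℚ) = x₀ := congrArg QuaternionAlgebra.re h1
  have himI : (0 : ℚ) = x₁ := congrArg QuaternionAlgebra.imI h1
  have : (1 : ℤ) = x₀ := by exact_mod_cast hre
  have : (0 : ℤ) = x₁ := by exact_mod_cast himI
  unfold SameParity at hx; omega

theorem exists_unit_mk'_eq_of_odd (hO : (O : Set D) = lattice)
    (hc : ∀ a b : O, c a b ↔ ∃ v : O, a - b = 2 * v) {a : O} {x₀ x₁ x₂ x₃ : ℤ}
    (hx : SameParity x₀ x₁ x₂ x₃) (hx₀ : x₀ % 2 = 1) (ha : (a : D) = half x₀ x₁ x₂ x₃) :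
    ∃ u : Oˣ, c.mk' u = c.mk' a := by
  unfold SameParity at hx
  obtain ⟨s₀, t₀, hs₀, hs₀', rfl⟩ := exists_sq_eq_one_add_four_mul hx₀
  obtain ⟨s₁, t₁, hs₁, hs₁', rfl⟩ := exists_sq_eq_one_add_four_mul (x := x₁) (by omega)
  obtain ⟨s₂, t₂, hs₂, hs₂', rfl⟩ := exists_sq_eq_one_add_four_mul (x := x₂) (by omega)
  obtain ⟨s₃, t₃, hs₃, hs₃', rfl⟩ := exists_sq_eq_one_add_four_mul (x := x₃) (by omega)
  refine ⟨unitOfHalf hO (s₀ := s₀) (s₁ := s₁) (s₂ := s₂) (s₃ := s₃)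
    (by unfold SameParity; omega) (by rw [hs₀, hs₁, hs₂, hs₃]; norm_num), ?_⟩
  refine mk'_eq_mk'_of_sub_eq hO hc (z₀ := -2 * t₀) (z₁ := -2 * t₁) (z₂ := -2 * t₂)
    (z₃ := -2 * t₃) (by unfold SameParity; omega) ?_
  rw [ha]; ext <;> simp [unitOfHalf, half] <;> ring

theorem mk'_sq_eq_zero_of_even (hO : (O : Set D) = lattice)
    (hc : ∀ a b : O, c a b ↔ ∃ v : O, a - b = 2 * v) {a : O} {y₀ y₁ y₂ y₃ : ℤ}
    (ha : (a : D) = ⟨y₀, y₁, y₂, y₃⟩) (hy : (y₀ + y₁ + y₂ + y₃) % 2 = 0) :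
    c.mk' a ^ 2 = 0 := by
  rw [← map_pow, ← map_zero c.mk']
  refine mk'_eq_mk'_of_sub_eq hO hc (z₀ := y₀ ^ 2 - y₁ ^ 2 - y₂ ^ 2 - y₃ ^ 2) (z₁ := 2 * (y₀ * y₁))
    (z₂ := 2 * (y₀ * y₂)) (z₃ := 2 * (y₀ * y₃)) ?_ ?_
  · have := sq_emod_two y₀; have := sq_emod_two y₁
    have := sq_emod_two y₂; have := sq_emod_two y₃
    unfold SameParity; omega
  · rw [ZeroMemClass.coe_zero, sub_zero, SubmonoidClass.coe_pow, ha, pow_two]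
    ext <;> simp <;> ring

theorem exists_unit_mk'_eq_of_odd_sum (hO : (O : Set D) = lattice)
    (hc : ∀ a b : O, c a b ↔ ∃ v : O, a - b = 2 * v) {a : O} {y₀ y₁ y₂ y₃ : ℤ}
    (ha : (a : D) = ⟨y₀, y₁, y₂, y₃⟩) (hy : (y₀ + y₁ + y₂ + y₃) % 2 = 1) :
    ∃ u : Oˣ, c.mk' u = c.mk' a := by
  let ω : Oˣ := unitOfHalf hO (s₀ := 1) (s₁ := 1) (s₂ := 1) (s₃ := 1) ⟨rfl, rfl, rfl⟩ (by norm_num)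
  obtain ⟨u, hu⟩ := exists_unit_mk'_eq_of_odd hO hc (a := a * ω)
    (x₀ := y₀ - y₁ - y₂ - y₃) (x₁ := y₀ + y₁ + y₂ - y₃) (x₂ := y₀ - y₁ + y₂ + y₃)
    (x₃ := y₀ + y₁ - y₂ + y₃) (by unfold SameParity; omega) (by omega)
    (by rw [Subring.coe_mul, ha]; ext <;> simp [ω, unitOfHalf, half] <;> ring)
  refine ⟨u * ω⁻¹, ?_⟩
  rw [Units.val_mul, map_mul, hu, map_mul, mul_assoc, ← map_mul, Units.mul_inv, map_one, mul_one]

theorem exists_unit_mk'_eq_or_mk'_sq_eq_zero (hO : (O : Set D) = lattice)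
    (hc : ∀ a b : O, c a b ↔ ∃ v : O, a - b = 2 * v) (a : O) :
    (∃ u : Oˣ, c.mk' u = c.mk' a) ∨ c.mk' a ^ 2 = 0 := by
  obtain ⟨x₀, x₁, x₂, x₃, hx, ha⟩ := (mem_iff hO).1 a.2
  by_cases hx₀ : x₀ % 2 = 1
  · exact .inl (exists_unit_mk'_eq_of_odd hO hc hx hx₀ ha)
  unfold SameParity at hx
  obtain ⟨y₀, rfl⟩ : ∃ y, x₀ = 2 * y := ⟨x₀ / 2, by omega⟩
  obtain ⟨y₁, rfl⟩ : ∃ y, x₁ = 2 * y := ⟨x₁ / 2, by omega⟩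
  obtain ⟨y₂, rfl⟩ : ∃ y, x₂ = 2 * y := ⟨x₂ / 2, by omega⟩
  obtain ⟨y₃, rfl⟩ : ∃ y, x₃ = 2 * y := ⟨x₃ / 2, by omega⟩
  rw [half_two_mul] at ha
  by_cases hy : (y₀ + y₁ + y₂ + y₃) % 2 = 0
  · exact .inr (mk'_sq_eq_zero_of_even hO hc ha hy)
  · exact .inl (exists_unit_mk'_eq_of_odd_sum hO hc ha (by omega))

end Hurwitz

/-- Let `O` be the Hurwitz order in `D = ℍ[ℚ, -1, -1]`,
i.e. the subring of `D` whose underlying set is the `ℤ`-span of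
`1, i, j, ω = (1 + i + j + ij)/2`.  Then the canonical ring homomorphism
`O → O/2O` (formalized as the quotient map for the ring congruence `c`
identifying `a` and `b` whenever `a - b ∈ 2O`) induces a surjective group
homomorphism `Oˣ → (O/2O)ˣ` on unit groups. -/
theorem stmt_17 (O : Subring (ℍ[ℚ, -1, -1]))
    (hO : (O : Set ℍ[ℚ, -1, -1]) =
      (Submodule.span ℤ ({1, ⟨0, 1, 0, 0⟩, ⟨0, 0, 1, 0⟩,
        ⟨1/2, 1/2, 1/2, 1/2⟩} : Set ℍ[ℚ, -1, -1]) : Set ℍ[ℚ, -1, -1]))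
    (c : RingCon O)
    (hc : ∀ a b : O, c a b ↔ ∃ v : O, a - b = 2 * v) :
    Function.Surjective (Units.map (RingCon.mk' c).toMonoidHom) := by
  have := Hurwitz.nontrivial_quotient hO hc
  intro w
  obtain ⟨a, ha⟩ := c.mk'_surjective (w : c.Quotient)
  rcases Hurwitz.exists_unit_mk'_eq_or_mk'_sq_eq_zero hO hc a with ⟨u, hu⟩ | ha2
  · exact ⟨u, Units.ext (hu.trans ha)⟩
  · exact absurd (ha ▸ ha2) (w.isUnit.pow 2).ne_zero
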